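/- For POVMs A and B on a Hilbert space H, if A ⪯_w B (A is weakly fuzzier than B, i.e. A(E) = ∫ κ(E|y) dB(y) for some B-weak Markov kernel κ), then for any f-divergence D_f and any states ρ, σ: D_f(P^A_ρ, P^A_σ) ≤ D_f(P^B_ρ, P^B_σ). Consequently, if A ≃_w B then D_f(P^A_ρ, P^A_σ) = D_f(P^B_ρ, P^B_σ) for all states ρ, σ. -/

import Mathlib

open MeasureTheory
open scoped InnerProductSpace ENNReal

/-- A positive-operator valued measure on outcome space `Ω` over the Hilbert space `H`.
σ-additivity in the weak operator topology is encoded by the family of scalar measures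
`E ↦ ⟪x, A(E) x⟫` attached to each vector `x`. -/
structure POVM (Ω : Type*) [MeasurableSpace Ω] (H : Type*) [NormedAddCommGroup H]
    [InnerProductSpace ℂ H] [CompleteSpace H] where
  toFun : Set Ω → H →L[ℂ] H
  pos : ∀ E, MeasurableSet E → (toFun E).IsPositive
  map_univ : toFun Set.univ = 1
  measure : H → MeasureTheory.Measure Ω
  measure_apply : ∀ (x : H) (E : Set Ω), MeasurableSet E →
    measure x E = ENNReal.ofReal (⟪x, toFun E x⟫_ℂ).re

variable {H : Type*} [NormedAddCommGroup H] [InnerProductSpace ℂ H] [CompleteSpace H]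

/-- A state (positive trace-class operator of unit trace), with trace computed
in the Hilbert basis `b` of the separable Hilbert space `H`. -/
structure QState (b : HilbertBasis ℕ ℂ H) where
  op : H →L[ℂ] H
  pos : op.IsPositive
  tr_one : HasSum (fun i => (⟪b i, op (b i)⟫_ℂ).re) 1

/-- The trace of an operator `T`, computed in the Hilbert basis `b`. -/
noncomputable def trOp (b : HilbertBasis ℕ ℂ H) (T : H →L[ℂ] H) : ℝ :=
  ∑' i, (⟪b i, T (b i)⟫_ℂ).re

/-- A property holds `A`-almost everywhere if it holds outside an `A`-null measurable set. -/
def POVM.ae {Ω : Type*} [MeasurableSpace Ω] (A : POVM Ω H) (p : Ω → Prop) : Prop :=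
  ∃ N, MeasurableSet N ∧ A.toFun N = 0 ∧ ∀ y ∉ N, p y

/-- A `B`-weak Markov kernel: measurable in the second argument, and satisfying the
probability measure axioms `B`-almost everywhere. -/
structure IsWeakMarkovKernel {Ω₁ Ω₂ : Type*} [MeasurableSpace Ω₁] [MeasurableSpace Ω₂]
    (B : POVM Ω₂ H) (κ : Set Ω₁ → Ω₂ → ℝ) : Prop where
  meas : ∀ E, MeasurableSet E → Measurable (κ E)
  bdd : ∀ E, MeasurableSet E → B.ae (fun y => 0 ≤ κ E y ∧ κ E y ≤ 1)
  univ : B.ae fun y => κ Set.univ y = 1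
  empty : B.ae fun y => κ ∅ y = 0
  additive : ∀ E : ℕ → Set Ω₁, (∀ n, MeasurableSet (E n)) →
    Pairwise (Function.onFun Disjoint E) →
    B.ae fun y => HasSum (fun n => κ (E n) y) (κ (⋃ n, E n) y)

/-- `A ⪯_w B`: `A(E) = ∫ κ(E|y) dB(y)` for a `B`-weak Markov kernel `κ`
(the operator equality is expressed weakly, via all vectors `x`). -/
def POVM.WeakFuzzier {Ω₁ Ω₂ : Type*} [MeasurableSpace Ω₁] [MeasurableSpace Ω₂]
    (A : POVM Ω₁ H) (B : POVM Ω₂ H) : Prop :=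
  ∃ κ : Set Ω₁ → Ω₂ → ℝ, IsWeakMarkovKernel B κ ∧
    ∀ E, MeasurableSet E → ∀ x : H, (⟪x, A.toFun E x⟫_ℂ).re = ∫ y, κ E y ∂(B.measure x)

/-- `A ≃_w B`: weak fuzzy equivalence. -/
def POVM.WeakEquiv {Ω₁ Ω₂ : Type*} [MeasurableSpace Ω₁] [MeasurableSpace Ω₂]
    (A : POVM Ω₁ H) (B : POVM Ω₂ H) : Prop :=
  A.WeakFuzzier B ∧ B.WeakFuzzier A

/-- The integrand of the `f`-divergence, with the conventions
`0 ⬝ f(p/0) = p f^*(0)` and `0 ⬝ f^*(0) = 0`, where `fstar = f^*(0) = lim_{t→∞} f(t)/t`. -/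
noncomputable def fDivAux (f : ℝ → ℝ) (fstar : ℝ) (p q : ℝ) : ℝ :=
  if q = 0 then p * fstar else f (p / q) * q

/-- The `f`-divergence `D_f(P,Q) = ∫ f(p/q) q dμ`, computed with the canonical
dominating measure `μ = P + Q`. -/
noncomputable def fDiv {Ω : Type*} [MeasurableSpace Ω] (f : ℝ → ℝ) (fstar : ℝ)
    (P Q : Measure Ω) : ℝ :=
  ∫ x, fDivAux f fstar ((P.rnDeriv (P + Q) x).toReal) ((Q.rnDeriv (P + Q) x).toReal) ∂(P + Q)

/-!
Measuring `A` in the state `ρ` yields the image of `P^B_ρ` under the kernel `κ` witnessing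
`A ⪯_w B` (expand `ρ = ∑ᵢ |√ρ bᵢ⟩⟨√ρ bᵢ|`), so the theorem is the data-processing inequality for
`D_f` under a kernel that is a probability measure only almost everywhere, one countable family
of sets at a time. Hence `D_f` is written variationally: the perspective `q f(p/q)` is the
supremum of the tangent lines `a p + b q` of `f` at the positive rationals, except on `{p = 0}`,
where the jump of `f` at `0` adds `(f 0 - f 0⁺) Q(dP = 0)`. For a tangent line chosen on each
cell `F` of a finite partition, `∑ a P(F) + b Q(F) = ∫ ∑ κ(F)(a p + b q) d(μ + ν)`, which is at
most the integrated supremum downstairs; dominated convergence lets such choices approach the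
supremum upstairs. Finally the singular mass `Q(dP = 0)` can only grow under `κ`.
-/

open Filter Set Topology

namespace ConvexOn

variable {f : ℝ → ℝ}

lemma add_rightDeriv_mul_sub_le {S : Set ℝ} (hf : ConvexOn ℝ S f) {t u : ℝ}
    (ht : t ∈ interior S) (hu : u ∈ S) :
    f t + derivWithin f (Ioi t) t * (u - t) ≤ f u := by
  rcases lt_trichotomy u t with hut | rfl | htu
  · have hslope := (hf.slope_le_leftDeriv_of_mem_interior hu ht hut).trans
      (hf.leftDeriv_le_rightDeriv_of_mem_interior ht)
    rw [slope_def_field, div_le_iff₀ (sub_pos.2 hut)] at hslope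
    linarith
  · simp
  · have hslope := hf.rightDeriv_le_slope_of_mem_interior ht hu htu
    rw [slope_def_field, le_div_iff₀ (sub_pos.2 htu)] at hslope
    linarith

variable {fstar : ℝ}

lemma rightDeriv_le_of_tendsto_div (hf : ConvexOn ℝ (Ici 0) f)
    (hfstar : Tendsto (fun s => f s / s) atTop (𝓝 fstar)) {t : ℝ} (ht : 0 < t) :
    derivWithin f (Ioi t) t ≤ fstar := by
  set a := derivWithin f (Ioi t) t
  have hlim : Tendsto (fun s => (f t - a * t) / s + a) atTop (𝓝 a) := by
    simpa using (tendsto_const_nhds.div_atTop tendsto_id).add_const a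
  refine le_of_tendsto_of_tendsto hlim hfstar ?_
  filter_upwards [eventually_gt_atTop 0] with s hs
  have hsupport :=
    hf.add_rightDeriv_mul_sub_le (t := t) (by rwa [interior_Ici]) (mem_Ici.2 hs.le)
  rw [div_add' _ _ _ hs.ne', div_le_div_iff_of_pos_right hs]
  linarith

lemma exists_rat_lt_rightDeriv (hf : ConvexOn ℝ (Ici 0) f)
    (hfstar : Tendsto (fun s => f s / s) atTop (𝓝 fstar)) {r : ℝ} (hr : r < fstar) :
    ∃ t : ℚ, 0 < (t : ℝ) ∧ r < derivWithin f (Ioi (t : ℝ)) t := by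
  have hlim : Tendsto (fun s => f s / s - f 0 / s) atTop (𝓝 fstar) := by
    simpa using hfstar.sub (tendsto_const_nhds.div_atTop tendsto_id)
  obtain ⟨T, hT⟩ := eventually_atTop.1 (hlim.eventually (lt_mem_nhds hr))
  obtain ⟨t, ht⟩ := exists_rat_gt (max T 0)
  have htpos : (0 : ℝ) < t := (le_max_right _ _).trans_lt ht
  refine ⟨t, htpos, (hT t ((le_max_left _ _).trans ht.le)).trans_le ?_⟩
  have hslope := (hf.slope_le_leftDeriv_of_mem_interior self_mem_Ici
    (by rwa [interior_Ici]) htpos).trans (hf.leftDeriv_le_rightDeriv_of_mem_interior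
    (by rwa [interior_Ici]))
  rwa [slope_def_field, sub_zero, sub_div] at hslope

lemma exists_rat_lt_add_rightDeriv_mul_sub (hf : ConvexOn ℝ (Ici 0) f) {u r : ℝ} (hu : 0 < u)
    (hr : r < f u) :
    ∃ t : ℚ, 0 < (t : ℝ) ∧ r < f t + derivWithin f (Ioi (t : ℝ)) t * (u - t) := by
  have hinterior : ∀ {s : ℝ}, 0 < s → s ∈ interior (Ici (0 : ℝ)) := fun hs => by
    rwa [interior_Ici]
  set a := derivWithin f (Ioi (u / 2)) (u / 2)
  have hcont : ContinuousAt (fun s => f s + a * (u - s)) u :=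
    ((hf.continuousOn_interior.continuousAt (isOpen_interior.mem_nhds (hinterior hu))).add
      (continuousAt_const.mul (continuousAt_const.sub continuousAt_id)))
  obtain ⟨l, l', ⟨hlu, hul'⟩, hsub⟩ := mem_nhds_iff_exists_Ioo_subset.1
    (hcont.eventually (lt_mem_nhds (by simpa using hr)))
  obtain ⟨t, hlt, htu⟩ := exists_rat_btwn (max_lt hlu (half_lt_self hu))
  have htpos : (0 : ℝ) < t := (half_pos hu).trans_le ((le_max_right _ _).trans hlt.le)
  refine ⟨t, htpos, (hsub ⟨(le_max_left _ _).trans_lt hlt, htu.trans hul'⟩).trans_le ?_⟩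
  have hmono : a ≤ derivWithin f (Ioi (t : ℝ)) t :=
    hf.monotoneOn_rightDeriv (hinterior (half_pos hu)) (hinterior htpos)
      ((le_max_right _ _).trans hlt.le)
  gcongr

end ConvexOn

/-- The codes of nonpositive rationals are sent to `1`, so that the range is exactly the set of
positive rationals. -/
noncomputable def posRat (n : ℕ) : ℝ :=
  if (0 : ℚ) < (Denumerable.eqv ℚ).symm n then ((Denumerable.eqv ℚ).symm n : ℝ) else 1

lemma posRat_pos (n : ℕ) : 0 < posRat n := by
  unfold posRat
  split_ifs with h
  · exact_mod_cast h
  · exact one_pos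

lemma exists_posRat_eq {t : ℚ} (ht : 0 < (t : ℝ)) : ∃ n, posRat n = t :=
  ⟨Denumerable.eqv ℚ t, by
    rw [posRat, Equiv.symm_apply_apply, if_pos (by exact_mod_cast ht)]⟩

noncomputable def supLinear (a b : ℕ → ℝ) (p q : ℝ) : ℝ := ⨆ n, a n * p + b n * q

section SupLinear

variable {a b : ℕ → ℝ} {C p q : ℝ}

lemma bddAbove_range_linear (hC : ∀ n p q, 0 ≤ p → 0 ≤ q → a n * p + b n * q ≤ C * (p + q))
    (hp : 0 ≤ p) (hq : 0 ≤ q) : BddAbove (range fun n => a n * p + b n * q) :=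
  ⟨C * (p + q), by rintro _ ⟨n, rfl⟩; exact hC n p q hp hq⟩

lemma le_supLinear (hC : ∀ n p q, 0 ≤ p → 0 ≤ q → a n * p + b n * q ≤ C * (p + q))
    (hp : 0 ≤ p) (hq : 0 ≤ q) (n : ℕ) : a n * p + b n * q ≤ supLinear a b p q :=
  le_ciSup (bddAbove_range_linear hC hp hq) n

lemma supLinear_le (hC : ∀ n p q, 0 ≤ p → 0 ≤ q → a n * p + b n * q ≤ C * (p + q))
    (hp : 0 ≤ p) (hq : 0 ≤ q) : supLinear a b p q ≤ C * (p + q) :=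
  ciSup_le fun n => hC n p q hp hq

lemma supLinear_zero_left (hq : 0 ≤ q) : supLinear a b 0 q = (⨆ n, b n) * q := by
  simp [supLinear, Real.iSup_mul_of_nonneg hq]

end SupLinear

noncomputable def tangentSlope (f : ℝ → ℝ) (n : ℕ) : ℝ := derivWithin f (Ioi (posRat n)) (posRat n)

noncomputable def tangentIntercept (f : ℝ → ℝ) (n : ℕ) : ℝ :=
  f (posRat n) - tangentSlope f n * posRat n

section Tangent

variable {f : ℝ → ℝ} {fstar : ℝ}

lemma tangent_apply_le (hf : ConvexOn ℝ (Ici 0) f) (n : ℕ) {u : ℝ} (hu : 0 ≤ u) :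
    tangentSlope f n * u + tangentIntercept f n ≤ f u := by
  have hsupport := hf.add_rightDeriv_mul_sub_le (by rw [interior_Ici]; exact posRat_pos n)
    (mem_Ici.2 hu)
  rw [tangentIntercept, tangentSlope]
  linarith

lemma tangentIntercept_le (hf : ConvexOn ℝ (Ici 0) f) (n : ℕ) : tangentIntercept f n ≤ f 0 := by
  simpa using tangent_apply_le hf n le_rfl

lemma tangentSlope_le (hf : ConvexOn ℝ (Ici 0) f)
    (hfstar : Tendsto (fun s => f s / s) atTop (𝓝 fstar)) (n : ℕ) : tangentSlope f n ≤ fstar :=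
  hf.rightDeriv_le_of_tendsto_div hfstar (posRat_pos n)

lemma tangent_mul_add_le_mul_add (hf : ConvexOn ℝ (Ici 0) f)
    (hfstar : Tendsto (fun s => f s / s) atTop (𝓝 fstar)) (n : ℕ) (p q : ℝ)
    (hp : 0 ≤ p) (hq : 0 ≤ q) :
    tangentSlope f n * p + tangentIntercept f n * q ≤ (|fstar| + |f 0|) * (p + q) := by
  have ha := (tangentSlope_le hf hfstar n).trans (le_abs_self fstar)
  have hb := (tangentIntercept_le hf n).trans (le_abs_self (f 0))
  nlinarith [abs_nonneg fstar, abs_nonneg (f 0)]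

lemma tangent_mul_add_le_fDivAux (hf : ConvexOn ℝ (Ici 0) f)
    (hfstar : Tendsto (fun s => f s / s) atTop (𝓝 fstar)) (n : ℕ) {p q : ℝ}
    (hp : 0 ≤ p) (hq : 0 ≤ q) :
    tangentSlope f n * p + tangentIntercept f n * q ≤ fDivAux f fstar p q := by
  rcases hq.eq_or_lt with rfl | hq
  · simpa [fDivAux, mul_comm p] using mul_le_mul_of_nonneg_right (tangentSlope_le hf hfstar n) hp
  · have := mul_le_mul_of_nonneg_left (tangent_apply_le hf n (div_nonneg hp hq.le)) hq.le
    rw [fDivAux, if_neg hq.ne']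
    field_simp at this ⊢
    linarith

lemma exists_lt_tangent_mul_add (hf : ConvexOn ℝ (Ici 0) f)
    (hfstar : Tendsto (fun s => f s / s) atTop (𝓝 fstar)) {p q r : ℝ} (hp : 0 < p) (hq : 0 ≤ q)
    (hr : r < fDivAux f fstar p q) :
    ∃ n, r < tangentSlope f n * p + tangentIntercept f n * q := by
  rcases hq.eq_or_lt with rfl | hq
  · rw [fDivAux, if_pos rfl, mul_comm] at hr
    obtain ⟨t, ht, hlt⟩ := hf.exists_rat_lt_rightDeriv hfstar ((div_lt_iff₀ hp).2 hr)
    obtain ⟨n, hn⟩ := exists_posRat_eq ht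
    refine ⟨n, ?_⟩
    rw [tangentSlope, hn, mul_zero, add_zero, ← div_lt_iff₀ hp]
    exact hlt
  · rw [fDivAux, if_neg hq.ne'] at hr
    obtain ⟨t, ht, hlt⟩ := hf.exists_rat_lt_add_rightDeriv_mul_sub (div_pos hp hq)
      ((div_lt_iff₀ hq).2 hr)
    obtain ⟨n, hn⟩ := exists_posRat_eq ht
    refine ⟨n, ?_⟩
    rw [tangentIntercept, tangentSlope, hn]
    rw [div_lt_iff₀ hq] at hlt
    field_simp at hlt
    linarith

lemma fDivAux_eq_supLinear (hf : ConvexOn ℝ (Ici 0) f)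
    (hfstar : Tendsto (fun s => f s / s) atTop (𝓝 fstar)) {p q : ℝ} (hp : 0 < p) (hq : 0 ≤ q) :
    fDivAux f fstar p q = supLinear (tangentSlope f) (tangentIntercept f) p q := by
  refine le_antisymm (le_of_forall_lt fun r hr => ?_)
    (ciSup_le fun n => tangent_mul_add_le_fDivAux hf hfstar n hp.le hq)
  obtain ⟨n, hn⟩ := exists_lt_tangent_mul_add hf hfstar hp hq hr
  exact hn.trans_le (le_supLinear (tangent_mul_add_le_mul_add hf hfstar) hp.le hq n)

end Tangent

section Selection

variable {α : Type*} [MeasurableSpace α]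

lemma measurable_selection_apply {h : ℕ → α → ℝ} (hh : ∀ n, Measurable (h n))
    {ψ : α → ℕ} (hψ : Measurable ψ) : Measurable fun x => h (ψ x) x :=
  (measurable_from_prod_countable_left (f := fun z : α × ℕ => h z.2 z.1) hh).comp
    (measurable_id.prodMk hψ)

lemma exists_measurable_sub_lt_apply {h : ℕ → α → ℝ} (hh : ∀ n, Measurable (h n)) {δ : ℝ}
    (hδ : 0 < δ) : ∃ ψ : α → ℕ, Measurable ψ ∧ ∀ x, (⨆ n, h n x) - δ < h (ψ x) x := by
  classical
  have hex : ∀ x, ∃ n, (⨆ n, h n x) - δ < h n x := fun x =>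
    exists_lt_of_lt_ciSup (sub_lt_self _ hδ)
  exact ⟨fun x => Nat.find (hex x),
    measurable_find hex fun n => measurableSet_lt ((Measurable.iSup hh).sub_const δ) (hh n),
    fun x => Nat.find_spec (hex x)⟩

lemma integral_iSup_le_of_forall_finite_selection {m : Measure α} [IsFiniteMeasure m]
    {h : ℕ → α → ℝ} (hh : ∀ n, Measurable (h n)) (hh0 : Integrable (h 0) m)
    (hbdd : ∀ x, BddAbove (range fun n => h n x)) (hsup : Integrable (fun x => ⨆ n, h n x) m)
    {B : ℝ} (hB : ∀ (s : Finset ℕ) (ψ : α → ℕ), Measurable ψ → (∀ x, ψ x ∈ s) →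
      ∫ x, h (ψ x) x ∂m ≤ B) :
    ∫ x, ⨆ n, h n x ∂m ≤ B := by
  set S := fun x => ⨆ n, h n x
  refine le_of_forall_pos_le_add fun ε hε => ?_
  set δ := ε / (m.real univ + 1)
  have hδ : 0 < δ := by positivity
  obtain ⟨ψ, hψ, hψlt⟩ := exists_measurable_sub_lt_apply hh hδ
  set ψN : ℕ → α → ℕ := fun N x => if ψ x ≤ N then ψ x else 0
  have hψN : ∀ N, Measurable (ψN N) := fun N =>
    Measurable.ite (hψ measurableSet_Iic) hψ measurable_const
  set G := fun x => |S x| + δ + |h 0 x|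
  have hG : Integrable G m := (hsup.abs.add (integrable_const δ)).add hh0.abs
  have hdom : ∀ n x, n = ψ x ∨ n = 0 → ‖h n x‖ ≤ G x := by
    rintro n x (rfl | rfl) <;> rw [Real.norm_eq_abs, abs_le]
    · have hlow := hψlt x
      have hup : h (ψ x) x ≤ S x := le_ciSup (hbdd x) _
      constructor <;> linarith [le_abs_self (S x), neg_abs_le (S x), abs_nonneg (h 0 x)]
    · constructor <;> linarith [le_abs_self (h 0 x), neg_abs_le (h 0 x), abs_nonneg (S x)]
  have hdomN : ∀ N x, ‖h (ψN N x) x‖ ≤ G x := fun N x =>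
    hdom _ x (by by_cases hN : ψ x ≤ N <;> simp [ψN, hN])
  have hint : Integrable (fun x => h (ψ x) x) m :=
    hG.mono' (measurable_selection_apply hh hψ).aestronglyMeasurable
      (ae_of_all _ fun x => hdom _ x (Or.inl rfl))
  have hlim : Tendsto (fun N => ∫ x, h (ψN N x) x ∂m) atTop (𝓝 (∫ x, h (ψ x) x ∂m)) := by
    refine tendsto_integral_of_dominated_convergence G
      (fun N => (measurable_selection_apply hh (hψN N)).aestronglyMeasurable) hG
      (fun N => ae_of_all _ (hdomN N)) (ae_of_all _ fun x => tendsto_const_nhds.congr' ?_)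
    filter_upwards [eventually_ge_atTop (ψ x)] with N hN
    simp [ψN, hN]
  have hselect : ∫ x, h (ψ x) x ∂m ≤ B := by
    refine le_of_tendsto' hlim fun N => hB (Finset.range (N + 1)) (ψN N) (hψN N) fun x => ?_
    by_cases hN : ψ x ≤ N <;> simp [ψN, hN]
  have hδm : δ * m.real univ ≤ ε := by
    rw [div_mul_eq_mul_div, div_le_iff₀ (by positivity)]
    nlinarith [measureReal_nonneg (μ := m) (s := univ)]
  calc ∫ x, S x ∂m ≤ ∫ x, (h (ψ x) x + δ) ∂m :=
        integral_mono hsup (hint.add (integrable_const δ)) fun x => by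
          linarith [hψlt x]
    _ = ∫ x, h (ψ x) x ∂m + δ * m.real univ := by
        rw [integral_add hint (integrable_const δ), integral_const, smul_eq_mul, mul_comm]
    _ ≤ B + ε := by linarith

lemma ae_toReal_rnDeriv_add_toReal_rnDeriv (P Q : Measure α) [IsFiniteMeasure P]
    [IsFiniteMeasure Q] :
    ∀ᵐ x ∂(P + Q), (P.rnDeriv (P + Q) x).toReal + (Q.rnDeriv (P + Q) x).toReal = 1 := by
  filter_upwards [P.rnDeriv_add' Q (P + Q), (P + Q).rnDeriv_self, P.rnDeriv_lt_top (P + Q),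
    Q.rnDeriv_lt_top (P + Q)] with x hadd hself hP hQ
  rw [← ENNReal.toReal_add hP.ne hQ.ne, ← Pi.add_apply, ← hadd, hself, ENNReal.toReal_one]

lemma integrable_supLinear_rnDeriv {a b : ℕ → ℝ} {C : ℝ}
    (hC : ∀ n p q, 0 ≤ p → 0 ≤ q → a n * p + b n * q ≤ C * (p + q))
    (P Q : Measure α) [IsFiniteMeasure P] [IsFiniteMeasure Q] :
    Integrable (fun x => supLinear a b (P.rnDeriv (P + Q) x).toReal
      (Q.rnDeriv (P + Q) x).toReal) (P + Q) := by
  refine (integrable_const (|C| + |a 0| + |b 0|)).mono' ?_ ?_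
  · exact (Measurable.iSup fun n =>
      ((Measure.measurable_rnDeriv _ _).ennreal_toReal.const_mul _).add
      ((Measure.measurable_rnDeriv _ _).ennreal_toReal.const_mul _)).aestronglyMeasurable
  filter_upwards [ae_toReal_rnDeriv_add_toReal_rnDeriv P Q] with x hx
  set p := (P.rnDeriv (P + Q) x).toReal
  set q := (Q.rnDeriv (P + Q) x).toReal
  have hp : 0 ≤ p := ENNReal.toReal_nonneg
  have hq : 0 ≤ q := ENNReal.toReal_nonneg
  have hlow := le_supLinear hC hp hq 0
  have hup := supLinear_le hC hp hq
  rw [hx, mul_one] at hup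
  rw [Real.norm_eq_abs, abs_le]
  constructor
  · have ha := mul_le_mul_of_nonneg_right (neg_abs_le (a 0)) hp
    have hb := mul_le_mul_of_nonneg_right (neg_abs_le (b 0)) hq
    nlinarith [abs_nonneg (a 0), abs_nonneg (b 0), abs_nonneg C]
  · linarith [le_abs_self C, abs_nonneg (a 0), abs_nonneg (b 0)]

end Selection

structure IsAEMarkovKernel {Ω₁ Ω₂ : Type*} [MeasurableSpace Ω₁] [MeasurableSpace Ω₂]
    (κ : Set Ω₁ → Ω₂ → ℝ) (m : Measure Ω₂) : Prop where
  measurable : ∀ E, MeasurableSet E → Measurable (κ E)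
  ae_bdd : ∀ E, MeasurableSet E → ∀ᵐ y ∂m, 0 ≤ κ E y ∧ κ E y ≤ 1
  ae_univ : ∀ᵐ y ∂m, κ univ y = 1
  ae_empty : ∀ᵐ y ∂m, κ ∅ y = 0
  ae_hasSum : ∀ E : ℕ → Set Ω₁, (∀ n, MeasurableSet (E n)) →
    Pairwise (Function.onFun Disjoint E) → ∀ᵐ y ∂m, HasSum (fun n => κ (E n) y) (κ (⋃ n, E n) y)

namespace IsAEMarkovKernel

variable {Ω₁ Ω₂ : Type*} [MeasurableSpace Ω₁] [MeasurableSpace Ω₂] {κ : Set Ω₁ → Ω₂ → ℝ}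
  {m m' : Measure Ω₂}

lemma mono (hκ : IsAEMarkovKernel κ m) (h : m' ≪ m) : IsAEMarkovKernel κ m' where
  measurable := hκ.measurable
  ae_bdd E hE := h.ae_le (hκ.ae_bdd E hE)
  ae_univ := h.ae_le hκ.ae_univ
  ae_empty := h.ae_le hκ.ae_empty
  ae_hasSum E hE hdisj := h.ae_le (hκ.ae_hasSum E hE hdisj)

lemma integrable [IsFiniteMeasure m] (hκ : IsAEMarkovKernel κ m) {E : Set Ω₁}
    (hE : MeasurableSet E) : Integrable (κ E) m :=
  (integrable_const 1).mono' (hκ.measurable E hE).aestronglyMeasurable <| by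
    filter_upwards [hκ.ae_bdd E hE] with y hy
    rw [Real.norm_eq_abs, abs_le]
    exact ⟨by linarith [hy.1], hy.2⟩

lemma ae_sum_preimage_eq_one (hκ : IsAEMarkovKernel κ m) {ψ : Ω₁ → ℕ} (hψ : Measurable ψ)
    {s : Finset ℕ} (hs : ∀ x, ψ x ∈ s) : ∀ᵐ y ∂m, ∑ n ∈ s, κ (ψ ⁻¹' {n}) y = 1 := by
  have hdisj : Pairwise (Function.onFun Disjoint fun n => ψ ⁻¹' {n}) := fun i j hij =>
    (Set.disjoint_singleton.2 hij).preimage ψ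
  have hunion : (⋃ n, ψ ⁻¹' {n}) = univ := by
    ext x
    simp
  filter_upwards [hκ.ae_hasSum _ (fun n => hψ (measurableSet_singleton n)) hdisj, hκ.ae_univ,
    hκ.ae_empty] with y hsum huniv hempty
  rw [hunion, huniv] at hsum
  refine (hasSum_sum_of_ne_finset_zero fun n hn => ?_).unique hsum
  rw [show ψ ⁻¹' {n} = ∅ from eq_empty_of_forall_notMem fun x hx => hn (hx ▸ hs x), hempty]

end IsAEMarkovKernel

lemma comp_eq_sum_indicator {α : Type*} (u : ℕ → ℝ) {ψ : α → ℕ} {s : Finset ℕ}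
    (hs : ∀ x, ψ x ∈ s) :
    (fun x => u (ψ x)) = fun x => ∑ n ∈ s, (ψ ⁻¹' {n}).indicator (fun _ => u n) x := by
  ext x
  rw [Finset.sum_eq_single_of_mem (f := fun n => (ψ ⁻¹' {n}).indicator (fun _ => u n) x) (ψ x)
    (hs x) fun n _ hn => indicator_of_notMem (fun h : ψ x = n => hn h.symm) _,
    indicator_of_mem (show x ∈ ψ ⁻¹' {ψ x} from mem_singleton _)]

section Kernel

variable {Ω₁ Ω₂ : Type*} [MeasurableSpace Ω₁] [MeasurableSpace Ω₂] {κ : Set Ω₁ → Ω₂ → ℝ}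

lemma integrable_comp_of_mem_finset {P : Measure Ω₁} [IsFiniteMeasure P] (u : ℕ → ℝ)
    {ψ : Ω₁ → ℕ} (hψ : Measurable ψ) {s : Finset ℕ} (hs : ∀ x, ψ x ∈ s) :
    Integrable (fun x => u (ψ x)) P := by
  rw [comp_eq_sum_indicator u hs]
  exact integrable_finsetSum _ fun n _ =>
    (integrable_const (u n)).indicator (hψ (measurableSet_singleton n))

lemma integral_comp_eq_integral_sum_kernel {P : Measure Ω₁} {μ : Measure Ω₂} [IsFiniteMeasure P]
    [IsFiniteMeasure μ] (hκ : IsAEMarkovKernel κ μ)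
    (hP : ∀ E, MeasurableSet E → P.real E = ∫ y, κ E y ∂μ) (u : ℕ → ℝ) {ψ : Ω₁ → ℕ}
    (hψ : Measurable ψ) {s : Finset ℕ} (hs : ∀ x, ψ x ∈ s) :
    ∫ x, u (ψ x) ∂P = ∫ y, ∑ n ∈ s, u n * κ (ψ ⁻¹' {n}) y ∂μ := by
  have hF : ∀ n, MeasurableSet (ψ ⁻¹' {n}) := fun n => hψ (measurableSet_singleton n)
  rw [comp_eq_sum_indicator u hs, integral_finsetSum _ fun n _ =>
      (integrable_const (u n)).indicator (hF n),
    integral_finsetSum _ fun n _ => (hκ.integrable (hF n)).const_mul (u n)]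
  refine Finset.sum_congr rfl fun n _ => ?_
  rw [integral_indicator_const _ (hF n), hP _ (hF n), integral_const_mul, smul_eq_mul, mul_comm]

variable {P Q : Measure Ω₁} {μ ν : Measure Ω₂} [IsFiniteMeasure P] [IsFiniteMeasure Q]
  [IsFiniteMeasure μ] [IsFiniteMeasure ν] {a b : ℕ → ℝ} {C : ℝ}

lemma integral_linear_selection_le
    (hC : ∀ n p q, 0 ≤ p → 0 ≤ q → a n * p + b n * q ≤ C * (p + q))
    (hκ : IsAEMarkovKernel κ (μ + ν)) (hP : ∀ E, MeasurableSet E → P.real E = ∫ y, κ E y ∂μ)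
    (hQ : ∀ E, MeasurableSet E → Q.real E = ∫ y, κ E y ∂ν) {ψ : Ω₁ → ℕ} (hψ : Measurable ψ)
    {s : Finset ℕ} (hs : ∀ x, ψ x ∈ s) :
    ∫ x, (a (ψ x) * (P.rnDeriv (P + Q) x).toReal + b (ψ x) * (Q.rnDeriv (P + Q) x).toReal)
      ∂(P + Q) ≤
    ∫ y, supLinear a b (μ.rnDeriv (μ + ν) y).toReal (ν.rnDeriv (μ + ν) y).toReal ∂(μ + ν) := by
  have hPac : P ≪ P + Q := Measure.AbsolutelyContinuous.rfl.add_right Q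
  have hQac : Q ≪ P + Q := Measure.AbsolutelyContinuous.rfl.add_right' P
  have hμac : μ ≪ μ + ν := Measure.AbsolutelyContinuous.rfl.add_right ν
  have hνac : ν ≪ μ + ν := Measure.AbsolutelyContinuous.rfl.add_right' μ
  set p := fun y => (μ.rnDeriv (μ + ν) y).toReal
  set q := fun y => (ν.rnDeriv (μ + ν) y).toReal
  set F := fun n => ψ ⁻¹' {n}
  have hF : ∀ n, MeasurableSet (F n) := fun n => hψ (measurableSet_singleton n)
  have hsumμ : Integrable (fun y => ∑ n ∈ s, a n * κ (F n) y) μ :=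
    integrable_finsetSum _ fun n _ => ((hκ.mono hμac).integrable (hF n)).const_mul _
  have hsumν : Integrable (fun y => ∑ n ∈ s, b n * κ (F n) y) ν :=
    integrable_finsetSum _ fun n _ => ((hκ.mono hνac).integrable (hF n)).const_mul _
  have hpsum := (integrable_toReal_rnDeriv_mul_iff hμac).2 hsumμ
  have hqsum := (integrable_toReal_rnDeriv_mul_iff hνac).2 hsumν
  calc ∫ x, (a (ψ x) * (P.rnDeriv (P + Q) x).toReal + b (ψ x) * (Q.rnDeriv (P + Q) x).toReal)
        ∂(P + Q)
      = ∫ x, a (ψ x) ∂P + ∫ x, b (ψ x) ∂Q := by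
        rw [← integral_toReal_rnDeriv_mul hPac, ← integral_toReal_rnDeriv_mul hQac,
          ← integral_add ((integrable_toReal_rnDeriv_mul_iff hPac).2
            (integrable_comp_of_mem_finset a hψ hs))
          ((integrable_toReal_rnDeriv_mul_iff hQac).2 (integrable_comp_of_mem_finset b hψ hs))]
        simp_rw [mul_comm]
    _ = ∫ y, ∑ n ∈ s, a n * κ (F n) y ∂μ + ∫ y, ∑ n ∈ s, b n * κ (F n) y ∂ν := by
        rw [integral_comp_eq_integral_sum_kernel (hκ.mono hμac) hP a hψ hs,
          integral_comp_eq_integral_sum_kernel (hκ.mono hνac) hQ b hψ hs]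
    _ = ∫ y, (p y * ∑ n ∈ s, a n * κ (F n) y + q y * ∑ n ∈ s, b n * κ (F n) y) ∂(μ + ν) := by
        rw [← integral_toReal_rnDeriv_mul hμac, ← integral_toReal_rnDeriv_mul hνac,
          ← integral_add hpsum hqsum]
    _ ≤ ∫ y, supLinear a b (p y) (q y) ∂(μ + ν) := by
        refine integral_mono_ae (hpsum.add hqsum) (integrable_supLinear_rnDeriv hC μ ν) ?_
        filter_upwards [hκ.ae_sum_preimage_eq_one hψ hs, ae_all_iff.2 fun n => hκ.ae_bdd _ (hF n)]
          with y hone hbdd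
        calc p y * ∑ n ∈ s, a n * κ (F n) y + q y * ∑ n ∈ s, b n * κ (F n) y
            = ∑ n ∈ s, κ (F n) y * (a n * p y + b n * q y) := by
              rw [Finset.mul_sum, Finset.mul_sum, ← Finset.sum_add_distrib]
              exact Finset.sum_congr rfl fun n _ => by ring
          _ ≤ ∑ n ∈ s, κ (F n) y * supLinear a b (p y) (q y) :=
              Finset.sum_le_sum fun n _ => mul_le_mul_of_nonneg_left
                (le_supLinear hC ENNReal.toReal_nonneg ENNReal.toReal_nonneg n) (hbdd n).1
          _ = supLinear a b (p y) (q y) := by rw [← Finset.sum_mul, hone, one_mul]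

theorem integral_supLinear_rnDeriv_le_of_kernel
    (hC : ∀ n p q, 0 ≤ p → 0 ≤ q → a n * p + b n * q ≤ C * (p + q))
    (hκ : IsAEMarkovKernel κ (μ + ν)) (hP : ∀ E, MeasurableSet E → P.real E = ∫ y, κ E y ∂μ)
    (hQ : ∀ E, MeasurableSet E → Q.real E = ∫ y, κ E y ∂ν) :
    ∫ x, supLinear a b (P.rnDeriv (P + Q) x).toReal (Q.rnDeriv (P + Q) x).toReal ∂(P + Q) ≤
    ∫ y, supLinear a b (μ.rnDeriv (μ + ν) y).toReal (ν.rnDeriv (μ + ν) y).toReal ∂(μ + ν) := by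
  have hmeas : ∀ n, Measurable fun x => a n * (P.rnDeriv (P + Q) x).toReal +
      b n * (Q.rnDeriv (P + Q) x).toReal := fun n =>
    ((Measure.measurable_rnDeriv _ _).ennreal_toReal.const_mul _).add
      ((Measure.measurable_rnDeriv _ _).ennreal_toReal.const_mul _)
  refine integral_iSup_le_of_forall_finite_selection hmeas ?_
    (fun x => bddAbove_range_linear hC ENNReal.toReal_nonneg ENNReal.toReal_nonneg)
    (integrable_supLinear_rnDeriv hC P Q)
    fun s ψ hψ hs => integral_linear_selection_le hC hκ hP hQ hψ hs
  exact (Measure.integrable_toReal_rnDeriv.const_mul _).add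
    (Measure.integrable_toReal_rnDeriv.const_mul _)

lemma measureReal_toReal_rnDeriv_eq_zero_le (hκ : IsAEMarkovKernel κ (μ + ν))
    (hP : ∀ E, MeasurableSet E → P.real E = ∫ y, κ E y ∂μ)
    (hQ : ∀ E, MeasurableSet E → Q.real E = ∫ y, κ E y ∂ν) :
    Q.real {x | (P.rnDeriv (P + Q) x).toReal = 0} ≤
      ν.real {y | (μ.rnDeriv (μ + ν) y).toReal = 0} := by
  have hμac : μ ≪ μ + ν := Measure.AbsolutelyContinuous.rfl.add_right ν
  have hνac : ν ≪ μ + ν := Measure.AbsolutelyContinuous.rfl.add_right' μ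
  set S := {x | (P.rnDeriv (P + Q) x).toReal = 0}
  set T := {y | (μ.rnDeriv (μ + ν) y).toReal = 0}
  have hS : MeasurableSet S :=
    (Measure.measurable_rnDeriv _ _).ennreal_toReal (measurableSet_singleton 0)
  have hT : MeasurableSet T :=
    (Measure.measurable_rnDeriv _ _).ennreal_toReal (measurableSet_singleton 0)
  have hPS : P.real S = 0 := by
    rw [← Measure.setIntegral_toReal_rnDeriv (Measure.AbsolutelyContinuous.rfl.add_right Q) S]
    exact setIntegral_eq_zero_of_forall_eq_zero fun x hx => hx
  have hκμ : κ S =ᵐ[μ] 0 := by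
    refine (integral_eq_zero_iff_of_nonneg_ae ?_ ((hκ.mono hμac).integrable hS)).1
      (by rw [← hP S hS, hPS])
    filter_upwards [(hκ.mono hμac).ae_bdd S hS] with y hy using hy.1
  have hκT : ∀ᵐ y ∂(μ + ν), (ν.rnDeriv (μ + ν) y).toReal * κ S y ≤
      T.indicator (fun y => (ν.rnDeriv (μ + ν) y).toReal) y := by
    filter_upwards [Measure.ae_rnDeriv_ne_zero_imp_of_ae (μ + ν) hκμ, hκ.ae_bdd S hS]
      with y hzero hbdd
    by_cases hy : y ∈ T
    · rw [indicator_of_mem hy]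
      exact mul_le_of_le_one_right ENNReal.toReal_nonneg hbdd.2
    · rw [indicator_of_notMem hy, hzero fun h => hy (by simp [T, h]), Pi.zero_apply, mul_zero]
  calc Q.real S = ∫ y, (ν.rnDeriv (μ + ν) y).toReal * κ S y ∂(μ + ν) := by
        rw [hQ S hS, integral_toReal_rnDeriv_mul hνac]
    _ ≤ ∫ y, T.indicator (fun y => (ν.rnDeriv (μ + ν) y).toReal) y ∂(μ + ν) := by
        refine integral_mono_ae ?_ ?_ hκT
        · exact (integrable_toReal_rnDeriv_mul_iff hνac).2 ((hκ.mono hνac).integrable hS)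
        · exact (Measure.integrable_toReal_rnDeriv).indicator hT
    _ = ν.real T := by rw [integral_indicator hT, Measure.setIntegral_toReal_rnDeriv hνac]

end Kernel

section FDiv

variable {f : ℝ → ℝ} {fstar : ℝ}

lemma fDivAux_zero_left (q : ℝ) : fDivAux f fstar 0 q = f 0 * q := by
  by_cases hq : q = 0 <;> simp [fDivAux, hq]

/-- `⨆ n, tangentIntercept f n = f 0⁺`, so the last term is the contribution of the jump of `f`
at `0`, which the tangent lines miss. -/
lemma fDiv_eq_integral_supLinear_add {α : Type*} [MeasurableSpace α]
    (hf : ConvexOn ℝ (Ici 0) f) (hfstar : Tendsto (fun s => f s / s) atTop (𝓝 fstar))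
    (P Q : Measure α) [IsFiniteMeasure P] [IsFiniteMeasure Q] :
    fDiv f fstar P Q =
      ∫ x, supLinear (tangentSlope f) (tangentIntercept f) (P.rnDeriv (P + Q) x).toReal
        (Q.rnDeriv (P + Q) x).toReal ∂(P + Q) +
      (f 0 - ⨆ n, tangentIntercept f n) * Q.real {x | (P.rnDeriv (P + Q) x).toReal = 0} := by
  set S := {x | (P.rnDeriv (P + Q) x).toReal = 0}
  have hS : MeasurableSet S :=
    (Measure.measurable_rnDeriv _ _).ennreal_toReal (measurableSet_singleton 0)
  have hpointwise : ∀ x,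
      fDivAux f fstar (P.rnDeriv (P + Q) x).toReal (Q.rnDeriv (P + Q) x).toReal =
        supLinear (tangentSlope f) (tangentIntercept f) (P.rnDeriv (P + Q) x).toReal
          (Q.rnDeriv (P + Q) x).toReal +
        (f 0 - ⨆ n, tangentIntercept f n) *
          S.indicator (fun x => (Q.rnDeriv (P + Q) x).toReal) x := by
    intro x
    by_cases hx : x ∈ S
    · rw [indicator_of_mem hx, show (P.rnDeriv (P + Q) x).toReal = 0 from hx, fDivAux_zero_left,
        supLinear_zero_left ENNReal.toReal_nonneg]
      ring
    · rw [indicator_of_notMem hx, mul_zero, add_zero]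
      exact fDivAux_eq_supLinear hf hfstar (ENNReal.toReal_nonneg.lt_of_ne (Ne.symm hx))
        ENNReal.toReal_nonneg
  rw [fDiv, integral_congr_ae (ae_of_all _ hpointwise),
    integral_add (integrable_supLinear_rnDeriv (tangent_mul_add_le_mul_add hf hfstar) P Q)
      ((Measure.integrable_toReal_rnDeriv.indicator hS).const_mul _),
    integral_const_mul, integral_indicator hS,
    Measure.setIntegral_toReal_rnDeriv (Measure.AbsolutelyContinuous.rfl.add_right' P)]

theorem fDiv_le_of_isAEMarkovKernel {Ω₁ Ω₂ : Type*} [MeasurableSpace Ω₁] [MeasurableSpace Ω₂]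
    (hf : ConvexOn ℝ (Ici 0) f) (hfstar : Tendsto (fun s => f s / s) atTop (𝓝 fstar))
    {P Q : Measure Ω₁} {μ ν : Measure Ω₂} [IsFiniteMeasure P] [IsFiniteMeasure Q]
    [IsFiniteMeasure μ] [IsFiniteMeasure ν] {κ : Set Ω₁ → Ω₂ → ℝ}
    (hκ : IsAEMarkovKernel κ (μ + ν)) (hP : ∀ E, MeasurableSet E → P.real E = ∫ y, κ E y ∂μ)
    (hQ : ∀ E, MeasurableSet E → Q.real E = ∫ y, κ E y ∂ν) :
    fDiv f fstar P Q ≤ fDiv f fstar μ ν := by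
  have hjump : 0 ≤ f 0 - ⨆ n, tangentIntercept f n :=
    sub_nonneg.2 (ciSup_le (tangentIntercept_le hf))
  rw [fDiv_eq_integral_supLinear_add hf hfstar P Q, fDiv_eq_integral_supLinear_add hf hfstar μ ν]
  exact add_le_add
    (integral_supLinear_rnDeriv_le_of_kernel (tangent_mul_add_le_mul_add hf hfstar) hκ hP hQ)
    (mul_le_mul_of_nonneg_left (measureReal_toReal_rnDeriv_eq_zero_le hκ hP hQ) hjump)

end FDiv

namespace HilbertBasis

lemma hasSum_norm_inner_sq {ι E : Type*} [NormedAddCommGroup E] [InnerProductSpace ℂ E]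
    (b : HilbertBasis ι ℂ E) (x : E) : HasSum (fun i => ‖⟪x, b i⟫_ℂ‖ ^ 2) (‖x‖ ^ 2) := by
  have h := (b.hasSum_inner_mul_inner x x).mapL Complex.reCLM
  rw [Complex.reCLM_apply, inner_self_eq_norm_sq_to_K] at h
  refine (by exact_mod_cast h : HasSum _ (‖x‖ ^ 2)).congr_fun fun i => ?_
  rw [Complex.reCLM_apply, ← inner_conj_symm (b i) x, Complex.mul_conj, Complex.ofReal_re,
    Complex.normSq_eq_norm_sq]

/-- Cyclicity of the trace for a product of two Hilbert–Schmidt operators. -/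
lemma exists_hasSum_inner_comp {ι : Type*} (b : HilbertBasis ι ℂ H) (U V : H →L[ℂ] H)
    (hU : Summable fun i => ‖(ContinuousLinearMap.adjoint U) (b i)‖ ^ 2)
    (hV : Summable fun i => ‖V (b i)‖ ^ 2) :
    ∃ S : ℂ, HasSum (fun i => ⟪b i, (U ∘L V) (b i)⟫_ℂ) S ∧
      HasSum (fun i => ⟪b i, (V ∘L U) (b i)⟫_ℂ) S := by
  set F : ι × ι → ℂ := fun ij =>
    ⟪(ContinuousLinearMap.adjoint U) (b ij.1), b ij.2⟫_ℂ * ⟪b ij.2, V (b ij.1)⟫_ℂ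
  have hdouble : ∀ w : ι → H, Summable (fun i => ‖w i‖ ^ 2) →
      Summable fun ij : ι × ι => ‖⟪w ij.1, b ij.2⟫_ℂ‖ ^ 2 := fun w hw =>
    (summable_prod_of_nonneg fun _ => sq_nonneg _).2
      ⟨fun i => (b.hasSum_norm_inner_sq (w i)).summable,
        hw.congr fun i => (b.hasSum_norm_inner_sq (w i)).tsum_eq.symm⟩
  have hU2 := hdouble _ hU
  have hV2 : Summable fun ij : ι × ι => ‖⟪b ij.2, V (b ij.1)⟫_ℂ‖ ^ 2 :=
    (hdouble _ hV).congr fun ij => by rw [norm_inner_symm]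
  have hF : Summable F := by
    refine Summable.of_norm_bounded ((hU2.add hV2).div_const 2) fun ij => ?_
    rw [norm_mul]
    nlinarith [sq_nonneg (‖⟪(ContinuousLinearMap.adjoint U) (b ij.1), b ij.2⟫_ℂ‖ -
      ‖⟪b ij.2, V (b ij.1)⟫_ℂ‖)]
  have hrow : ∀ i, HasSum (fun j => F (i, j)) ⟪b i, (U ∘L V) (b i)⟫_ℂ := fun i => by
    simpa [F, ContinuousLinearMap.adjoint_inner_left] using
      b.hasSum_inner_mul_inner ((ContinuousLinearMap.adjoint U) (b i)) (V (b i))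
  have hcol : ∀ j, HasSum (fun i => F (i, j)) ⟪b j, (V ∘L U) (b j)⟫_ℂ := fun j => by
    have h := b.hasSum_inner_mul_inner ((ContinuousLinearMap.adjoint V) (b j)) (U (b j))
    simp only [ContinuousLinearMap.adjoint_inner_left] at h
    refine h.congr_fun fun i => ?_
    simp only [F, ContinuousLinearMap.adjoint_inner_left]
    ring
  exact ⟨_, hF.hasSum.prod_fiberwise hrow,
    ((Equiv.prodComm ι ι).hasSum_iff.2 hF.hasSum).prod_fiberwise hcol⟩

end HilbertBasis

namespace QState

variable {b : HilbertBasis ℕ ℂ H} (ρ : QState b)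

lemma sqrt_isPositive : (CFC.sqrt ρ.op).IsPositive :=
  (ContinuousLinearMap.nonneg_iff_isPositive _).1 (CFC.sqrt_nonneg _)

lemma sqrt_comp_sqrt : CFC.sqrt ρ.op ∘L CFC.sqrt ρ.op = ρ.op :=
  CFC.sqrt_mul_sqrt_self ρ.op ((ContinuousLinearMap.nonneg_iff_isPositive _).2 ρ.pos)

lemma adjoint_sqrt : ContinuousLinearMap.adjoint (CFC.sqrt ρ.op) = CFC.sqrt ρ.op := by
  rw [← ContinuousLinearMap.star_eq_adjoint]
  exact ρ.sqrt_isPositive.isSelfAdjoint.star_eq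

lemma hasSum_norm_sqrt_sq : HasSum (fun i => ‖CFC.sqrt ρ.op (b i)‖ ^ 2) 1 := by
  refine ρ.tr_one.congr_fun fun i => ?_
  rw [show ρ.op (b i) = CFC.sqrt ρ.op (CFC.sqrt ρ.op (b i)) by
      rw [← ContinuousLinearMap.comp_apply, ρ.sqrt_comp_sqrt],
    ← ContinuousLinearMap.adjoint_inner_left, adjoint_sqrt, inner_self_eq_norm_sq_to_K]
  norm_cast

lemma hasSum_inner_sqrt (X : H →L[ℂ] H) :
    HasSum (fun i => (⟪CFC.sqrt ρ.op (b i), X (CFC.sqrt ρ.op (b i))⟫_ℂ).re)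
      (trOp b (ρ.op ∘L X)) := by
  set T := CFC.sqrt ρ.op
  have hT : ContinuousLinearMap.adjoint T = T := ρ.adjoint_sqrt
  have hXT : Summable fun i => ‖ContinuousLinearMap.adjoint (T ∘L X) (b i)‖ ^ 2 := by
    rw [ContinuousLinearMap.adjoint_comp, hT]
    refine Summable.of_nonneg_of_le (fun i => sq_nonneg _) (fun i => ?_)
      (ρ.hasSum_norm_sqrt_sq.summable.mul_left (‖ContinuousLinearMap.adjoint X‖ ^ 2))
    rw [← mul_pow]
    exact pow_le_pow_left₀ (norm_nonneg _)
      ((ContinuousLinearMap.adjoint X).le_opNorm (T (b i))) 2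
  obtain ⟨S, hTXT, hρX⟩ := b.exists_hasSum_inner_comp (T ∘L X) T hXT
    ρ.hasSum_norm_sqrt_sq.summable
  rw [← ContinuousLinearMap.comp_assoc, ρ.sqrt_comp_sqrt] at hρX
  have hre := hρX.mapL Complex.reCLM
  rw [show trOp b (ρ.op ∘L X) = S.re from hre.tsum_eq]
  refine (hTXT.mapL Complex.reCLM).congr_fun fun i => ?_
  rw [Complex.reCLM_apply, ContinuousLinearMap.comp_apply, ContinuousLinearMap.comp_apply,
    ← ContinuousLinearMap.adjoint_inner_left T, hT]

end QState

lemma POVM.ae.ae_measure {Ω : Type*} [MeasurableSpace Ω] {B : POVM Ω H} {p : Ω → Prop}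
    (hp : B.ae p) {m : Measure Ω} (hm : ∀ N, MeasurableSet N → B.toFun N = 0 → m N = 0) :
    ∀ᵐ y ∂m, p y := by
  obtain ⟨N, hN, hBN, hpN⟩ := hp
  exact measure_mono_null (fun y hy => by_contra fun hyN => hy (hpN y hyN)) (hm N hN hBN)

lemma IsWeakMarkovKernel.isAEMarkovKernel {Ω₁ Ω₂ : Type*} [MeasurableSpace Ω₁]
    [MeasurableSpace Ω₂] {B : POVM Ω₂ H} {κ : Set Ω₁ → Ω₂ → ℝ} (hκ : IsWeakMarkovKernel B κ)
    {m : Measure Ω₂} (hm : ∀ N, MeasurableSet N → B.toFun N = 0 → m N = 0) :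
    IsAEMarkovKernel κ m where
  measurable := hκ.meas
  ae_bdd E hE := (hκ.bdd E hE).ae_measure hm
  ae_univ := hκ.univ.ae_measure hm
  ae_empty := hκ.empty.ae_measure hm
  ae_hasSum E hE hdisj := (hκ.additive E hE hdisj).ae_measure hm

/-- `P = P^A_ρ`. -/
def IsOutcomeMeasure {Ω : Type*} [MeasurableSpace Ω] {b : HilbertBasis ℕ ℂ H} (ρ : QState b)
    (A : POVM Ω H) (P : Measure Ω) : Prop :=
  ∀ E, MeasurableSet E → (P E).toReal = trOp b (ρ.op ∘L A.toFun E)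

namespace IsOutcomeMeasure

variable {Ω : Type*} [MeasurableSpace Ω] {b : HilbertBasis ℕ ℂ H} {ρ : QState b}
  {A : POVM Ω H} {P : Measure Ω} [IsFiniteMeasure P]

lemma measure_eq_zero (hP : IsOutcomeMeasure ρ A P) {N : Set Ω} (hN : MeasurableSet N)
    (hAN : A.toFun N = 0) : P N = 0 := by
  have h := hP N hN
  rw [hAN, ContinuousLinearMap.comp_zero] at h
  simpa [trOp, ENNReal.toReal_eq_zero_iff, measure_ne_top P N] using h

lemma eq_sum_measure (hP : IsOutcomeMeasure ρ A P) :
    P = Measure.sum fun i => A.measure (CFC.sqrt ρ.op (b i)) := by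
  ext F hF
  have hsum := ρ.hasSum_inner_sqrt (A.toFun F)
  have hnonneg : ∀ i, 0 ≤ (⟪CFC.sqrt ρ.op (b i), A.toFun F (CFC.sqrt ρ.op (b i))⟫_ℂ).re :=
    fun i => (Complex.nonneg_iff.1 ((A.pos F hF).inner_nonneg_right _)).1
  rw [Measure.sum_apply _ hF, ← ENNReal.ofReal_toReal (measure_ne_top P F), hP F hF,
    ← hsum.tsum_eq, ENNReal.ofReal_tsum_of_nonneg hnonneg hsum.summable]
  exact tsum_congr fun i => (A.measure_apply _ F hF).symm

end IsOutcomeMeasure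

lemma IsOutcomeMeasure.measureReal_eq_integral {ΩA ΩB : Type*} [MeasurableSpace ΩA]
    [MeasurableSpace ΩB] {b : HilbertBasis ℕ ℂ H} {ρ : QState b} {A : POVM ΩA H}
    {B : POVM ΩB H} {PA : Measure ΩA} {PB : Measure ΩB} [IsFiniteMeasure PB]
    (hPA : IsOutcomeMeasure ρ A PA) (hPB : IsOutcomeMeasure ρ B PB) {κ : Set ΩA → ΩB → ℝ}
    (hκ : IsWeakMarkovKernel B κ)
    (hAκ : ∀ E, MeasurableSet E → ∀ x : H, (⟪x, A.toFun E x⟫_ℂ).re = ∫ y, κ E y ∂(B.measure x))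
    {E : Set ΩA} (hE : MeasurableSet E) :
    PA.real E = ∫ y, κ E y ∂PB := by
  have hint := (hκ.isAEMarkovKernel fun N hN h0 => hPB.measure_eq_zero hN h0).integrable hE
  rw [hPB.eq_sum_measure] at hint ⊢
  rw [integral_sum_measure hint, measureReal_def, hPA E hE,
    ← (ρ.hasSum_inner_sqrt (A.toFun E)).tsum_eq]
  exact tsum_congr fun i => hAκ E hE _

theorem fDiv_le_of_weakFuzzier {ΩA ΩB : Type*} [MeasurableSpace ΩA] [MeasurableSpace ΩB]
    {b : HilbertBasis ℕ ℂ H} {A : POVM ΩA H} {B : POVM ΩB H} {f : ℝ → ℝ} {fstar : ℝ}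
    (hf : ConvexOn ℝ (Ici 0) f) (hfstar : Tendsto (fun s => f s / s) atTop (𝓝 fstar))
    (hAB : A.WeakFuzzier B) {ρ σ : QState b} {PAρ PAσ : Measure ΩA} {PBρ PBσ : Measure ΩB}
    [IsFiniteMeasure PAρ] [IsFiniteMeasure PAσ] [IsFiniteMeasure PBρ] [IsFiniteMeasure PBσ]
    (hPAρ : IsOutcomeMeasure ρ A PAρ) (hPAσ : IsOutcomeMeasure σ A PAσ)
    (hPBρ : IsOutcomeMeasure ρ B PBρ) (hPBσ : IsOutcomeMeasure σ B PBσ) :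
    fDiv f fstar PAρ PAσ ≤ fDiv f fstar PBρ PBσ := by
  obtain ⟨κ, hκ, hAκ⟩ := hAB
  refine fDiv_le_of_isAEMarkovKernel hf hfstar (hκ.isAEMarkovKernel fun N hN h0 => ?_)
    (fun E hE => hPAρ.measureReal_eq_integral hPBρ hκ hAκ hE)
    (fun E hE => hPAσ.measureReal_eq_integral hPBσ hκ hAκ hE)
  rw [Measure.add_apply, hPBρ.measure_eq_zero hN h0, hPBσ.measure_eq_zero hN h0, add_zero]

theorem stmt9_general {ΩA ΩB : Type*} [MeasurableSpace ΩA] [MeasurableSpace ΩB]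
    (b : HilbertBasis ℕ ℂ H) (A : POVM ΩA H) (B : POVM ΩB H)
    (f : ℝ → ℝ) (fstar : ℝ)
    (hconv : StrictConvexOn ℝ (Set.Ici (0 : ℝ)) f)
    (hfstar : Filter.Tendsto (fun t => f t / t) Filter.atTop (nhds fstar))
    (PA : QState b → Measure ΩA) (PB : QState b → Measure ΩB)
    (hPA : ∀ (τ : QState b) E, MeasurableSet E → (PA τ E).toReal = trOp b (τ.op ∘L A.toFun E))
    (hPAp : ∀ τ, IsProbabilityMeasure (PA τ))
    (hPB : ∀ (τ : QState b) E, MeasurableSet E → (PB τ E).toReal = trOp b (τ.op ∘L B.toFun E))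
    (hPBp : ∀ τ, IsProbabilityMeasure (PB τ))
    (hAB : A.WeakFuzzier B) :
    (∀ ρ σ : QState b, fDiv f fstar (PA ρ) (PA σ) ≤ fDiv f fstar (PB ρ) (PB σ)) ∧
      (B.WeakFuzzier A →
        ∀ ρ σ : QState b, fDiv f fstar (PA ρ) (PA σ) = fDiv f fstar (PB ρ) (PB σ)) := by
  have hf := hconv.convexOn
  refine ⟨fun ρ σ => ?_, fun hBA ρ σ => ?_⟩ <;>
    have := hPAp ρ <;> have := hPAp σ <;> have := hPBp ρ <;> have := hPBp σ
  · exact fDiv_le_of_weakFuzzier hf hfstar hAB (hPA ρ) (hPA σ) (hPB ρ) (hPB σ)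
  · exact le_antisymm (fDiv_le_of_weakFuzzier hf hfstar hAB (hPA ρ) (hPA σ) (hPB ρ) (hPB σ))
      (fDiv_le_of_weakFuzzier hf hfstar hBA (hPB ρ) (hPB σ) (hPA ρ) (hPA σ))

/-- monotonicity of the `f`-divergence. If `A ⪯_w B` then
`D_f(P^A_ρ, P^A_σ) ≤ D_f(P^B_ρ, P^B_σ)` for all states `ρ, σ`; consequently if
`A ≃_w B` the `f`-divergences coincide. -/
theorem stmt9 {ΩA ΩB : Type*} [MeasurableSpace ΩA] [MeasurableSpace ΩB]
    (b : HilbertBasis ℕ ℂ H) (A : POVM ΩA H) (B : POVM ΩB H)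
    (f : ℝ → ℝ) (fstar : ℝ)
    (hconv : StrictConvexOn ℝ (Set.Ici (0 : ℝ)) f) (hf1 : f 1 = 0)
    (hfstar : Filter.Tendsto (fun t => f t / t) Filter.atTop (nhds fstar))
    (PA : QState b → Measure ΩA) (PB : QState b → Measure ΩB)
    (hPA : ∀ (τ : QState b) E, MeasurableSet E → (PA τ E).toReal = trOp b (τ.op ∘L A.toFun E))
    (hPAp : ∀ τ, IsProbabilityMeasure (PA τ))
    (hPB : ∀ (τ : QState b) E, MeasurableSet E → (PB τ E).toReal = trOp b (τ.op ∘L B.toFun E))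
    (hPBp : ∀ τ, IsProbabilityMeasure (PB τ))
    (hAB : A.WeakFuzzier B) :
    (∀ ρ σ : QState b, fDiv f fstar (PA ρ) (PA σ) ≤ fDiv f fstar (PB ρ) (PB σ)) ∧
      (B.WeakFuzzier A →
        ∀ ρ σ : QState b, fDiv f fstar (PA ρ) (PA σ) = fDiv f fstar (PB ρ) (PB σ)) :=
  stmt9_general b A B f fstar hconv hfstar PA PB hPA hPAp hPB hPBp hAB
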